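/- Let u be an oriented word of rank k ≥ 2. The positive cone P_u = {g ∈ F_k : τ_u(g) > 0} is closed under word reversal of reduced words if and only if u = u^{-1} as words. -/

import Mathlib

open FreeGroup

/-- A letter over the alphabet `{a_1,...,a_k, a_1⁻¹,...,a_k⁻¹}`:
`(i, true)` is the positive letter `a_i`, `(i, false)` is `a_i⁻¹`. -/
abbrev Letter (k : ℕ) := Fin k × Bool

/-- Formal inverse of a letter. -/
def invL {k : ℕ} (x : Letter k) : Letter k := (x.1, !x.2)

/-- An oriented word of rank `k`: each of the `2k` letters appears exactly once. -/
def IsOriented {k : ℕ} (u : List (Letter k)) : Prop :=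
  u.Nodup ∧ ∀ x : Letter k, x ∈ u

/-- `x` occurs to the left of `y` in `u`. -/
def leftOf {k : ℕ} (u : List (Letter k)) (x y : Letter k) : Prop :=
  u.idxOf x < u.idxOf y

instance {k : ℕ} (u : List (Letter k)) (x y : Letter k) : Decidable (leftOf u x y) :=
  inferInstanceAs (Decidable (_ < _))

/-- Number of occurrences of the two-letter word `xy` as a contiguous subword of `L`. -/
def cnt {k : ℕ} (L : List (Letter k)) (x y : Letter k) : ℕ :=
  (L.zip L.tail).count (x, y)

/-- The case transition weight `α_u`, on a reduced word `L`. -/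
noncomputable def alphaW {k : ℕ} (u L : List (Letter k)) : ℝ :=
  (∑ a : Fin k, ∑ b : Fin k,
      if leftOf u (a, false) (b, false) then (cnt L (a, true) (b, false) : ℝ) else 0)
  - ∑ a : Fin k, ∑ b : Fin k,
      if leftOf u (a, true) (b, true) then (cnt L (b, false) (a, true) : ℝ) else 0

/-- The letter transition weight `β_u`, on a reduced word `L`. -/
noncomputable def betaW {k : ℕ} (u L : List (Letter k)) : ℝ :=
  (∑ a : Fin k, ∑ b : Fin k,
      if leftOf u (a, false) (b, true) then (cnt L (a, true) (b, true) : ℝ) else 0)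
  - ∑ a : Fin k, ∑ b : Fin k,
      if leftOf u (a, false) (b, true) then (cnt L (b, false) (a, false) : ℝ) else 0

/-- The last letter weight `ω`, on a reduced word `L`. -/
noncomputable def omegaW {k : ℕ} (L : List (Letter k)) : ℝ :=
  match L.getLast? with
  | none => 0
  | some x => if x.2 then 1 / 2 else -(1 / 2)

/-- The weight `τ_u` induced by an oriented word `u`, evaluated on the reduced form. -/
noncomputable def tau {k : ℕ} (u : List (Letter k)) (g : FreeGroup (Fin k)) : ℝ :=
  alphaW u g.toWord + betaW u g.toWord + omegaW g.toWord

/-- The weight contribution `wtc_u` of a reduced two-letter word `xy`. -/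
noncomputable def wtc {k : ℕ} (u : List (Letter k)) (x y : Letter k) : ℝ :=
  if x.2 then (if leftOf u (x.1, false) y then 1 else 0)
  else (if leftOf u y (x.1, true) then -1 else 0)

/-- The inverse word of `u`. -/
def invWord {k : ℕ} (u : List (Letter k)) : List (Letter k) := (u.map invL).reverse

/-- A function `τ : G → ℝ` with small relative defect. -/
def SmallRelDefect {G : Type*} [Group G] (τ : G → ℝ) : Prop :=
  τ 1 = 0 ∧ ∀ g h : G, (g ≠ 1 ∨ h ≠ 1) → |τ g + τ h - τ (g * h)| < |τ g| + |τ h|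

/-!
On a reduced word, `τ_u` is the sum of `wtc u x y` over adjacent letters `x y` plus the sign
`±1/2` of the last letter; in particular `τ_u(xy) = wtc u x y + sign y`. If `u = u⁻¹`, inverting
letters reverses the order of `u`, which gives `τ_u(xy) = τ_u(yx)` for reduced `xy`; the sum then
telescopes, so `τ_u` is invariant under reversal. If `u ≠ u⁻¹`, some letters `x`, `y` have both
`x` before `y` and `x⁻¹` before `y⁻¹` in `u`, and a reduced word of length two or three in these
letters has weight `1/2` while its reversal has weight `-1/2`.
-/

open List

section Letters

variable {k : ℕ}

@[simp] lemma invL_invL (x : Letter k) : invL (invL x) = x := by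
  simp [invL]

lemma invL_injective : Function.Injective (invL (k := k)) :=
  Function.LeftInverse.injective invL_invL

end Letters

section Order

variable {k : ℕ} {u : List (Letter k)} {x y : Letter k}

lemma leftOf_asymm (h : leftOf u x y) : ¬ leftOf u y x :=
  lt_asymm h

lemma leftOf_total (hu : IsOriented u) (hxy : x ≠ y) : leftOf u x y ∨ leftOf u y x :=
  lt_or_gt_of_ne fun h => hxy ((List.idxOf_inj (hu.2 x)).mp h)

lemma leftOf_iff_sublist (hu : u.Nodup) (hy : y ∈ u) : leftOf u x y ↔ [x, y] <+ u := by
  induction u with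
  | nil => simp at hy
  | cons a t ih =>
    obtain ⟨hat, ht⟩ := List.nodup_cons.mp hu
    simp only [leftOf, List.idxOf_cons, Bool.cond_eq_ite, beq_iff_eq] at ih ⊢
    rcases eq_or_ne a x with rfl | hxa <;> rcases eq_or_ne a y with rfl | hya
    · simp [hat]
    · simp_all [eq_comm]
    · simp_all [List.sublist_cons_iff]
      exact fun h => hat (h.subset (by simp))
    · simp_all [List.sublist_cons_iff, eq_comm]

lemma pair_sublist_invWord_iff : [x, y] <+ invWord u ↔ [invL y, invL x] <+ u := by
  rw [invWord, sublist_reverse_iff]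
  simp only [reverse_cons, reverse_nil, nil_append, cons_append]
  exact ⟨fun h => by simpa [Function.comp_def] using h.map invL, fun h => by simpa using h.map invL⟩

lemma IsOriented.invWord (hu : IsOriented u) : IsOriented (invWord u) :=
  ⟨nodup_reverse.mpr (hu.1.map invL_injective),
    fun x => mem_reverse.mpr (by simpa using mem_map_of_mem (f := invL) (hu.2 (invL x)))⟩

lemma leftOf_invWord_iff (hu : IsOriented u) :
    leftOf (invWord u) x y ↔ leftOf u (invL y) (invL x) := by
  rw [leftOf_iff_sublist hu.invWord.1 (hu.invWord.2 y), leftOf_iff_sublist hu.1 (hu.2 _),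
    pair_sublist_invWord_iff]

lemma leftOf_iff_of_eq_invWord (hu : IsOriented u) (h : u = invWord u) :
    leftOf u x y ↔ leftOf u (invL y) (invL x) := by
  conv_lhs => rw [h]
  exact leftOf_invWord_iff hu

lemma eq_invWord_of_forall_leftOf (hu : IsOriented u)
    (h : ∀ x y, leftOf u x y → leftOf u (invL y) (invL x)) : u = invWord u := by
  refine Perm.eq_of_pairwise (le := leftOf u) (fun _ _ _ _ hxy hyx => absurd hyx (leftOf_asymm hxy))
    (pairwise_of_forall_sublist fun hxy => ?_) (pairwise_of_forall_sublist fun hxy => ?_)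
    ((perm_ext_iff_of_nodup hu.1 hu.invWord.1).mpr fun x => iff_of_true (hu.2 x) (hu.invWord.2 x))
  · exact (leftOf_iff_sublist hu.1 (hxy.subset (by simp))).mpr hxy
  · simpa using h _ _ ((leftOf_iff_sublist hu.1 (hu.2 _)).mpr (pair_sublist_invWord_iff.mp hxy))

lemma exists_leftOf_leftOf_invL_of_ne_invWord (hu : IsOriented u) (hne : u ≠ invWord u) :
    ∃ x y, leftOf u x y ∧ leftOf u (invL x) (invL y) := by
  by_contra! h
  refine hne (eq_invWord_of_forall_leftOf hu fun x y hxy => ?_)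
  refine (leftOf_total hu fun he => ?_).resolve_left (h x y hxy)
  exact (lt_irrefl _) (invL_injective he ▸ hxy)

end Order

lemma List.sum_map_eq_sum_count_mul {ι : Type*} [Fintype ι] [BEq ι] [LawfulBEq ι] (l : List ι)
    (f : ι → ℝ) : (l.map f).sum = ∑ i, (l.count i : ℝ) * f i := by
  classical
  obtain rfl : ‹BEq ι› = instBEqOfDecidableEq := lawful_beq_subsingleton _ _
  rw [Finset.sum_list_map_count]
  refine Finset.sum_subset (Finset.subset_univ _) (fun i _ hi => ?_) |>.trans ?_
  · rw [count_eq_zero_of_not_mem (by simpa using hi), zero_smul]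
  · simp only [nsmul_eq_mul]

lemma FreeGroup.IsReduced.reverse {α : Type*} {L : List (α × Bool)} (hL : IsReduced L) :
    IsReduced L.reverse :=
  List.isChain_reverse.mpr (hL.imp fun _ _ h he => (h he.symm).symm)

section Weight

variable {k : ℕ} {u : List (Letter k)}

noncomputable def wtcSum (u : List (Letter k)) : List (Letter k) → ℝ
  | x :: y :: t => wtc u x y + wtcSum u (y :: t)
  | _ => 0

noncomputable def letterSign (x : Letter k) : ℝ := if x.2 then 1 / 2 else -(1 / 2)

lemma wtcSum_eq_sum_zip (u L : List (Letter k)) :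
    wtcSum u L = ((L.zip L.tail).map fun p => wtc u p.1 p.2).sum := by
  induction L with
  | nil => rfl
  | cons x t ih =>
    cases t with
    | nil => rfl
    | cons y s => simp [wtcSum, ih]

lemma alphaW_add_betaW (u L : List (Letter k)) : alphaW u L + betaW u L = wtcSum u L := by
  rw [wtcSum_eq_sum_zip, List.sum_map_eq_sum_count_mul]
  simp only [Fintype.sum_prod_type, Fintype.sum_bool, alphaW, betaW, cnt]
  rw [Finset.sum_comm (γ := Fin k) (f := fun a b => if leftOf u (a, true) (b, true) then
      ((L.zip L.tail).count ((b, false), (a, true)) : ℝ) else 0),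
    Finset.sum_comm (γ := Fin k) (f := fun a b => if leftOf u (a, false) (b, true) then
      ((L.zip L.tail).count ((b, false), (a, false)) : ℝ) else 0)]
  simp only [← Finset.sum_sub_distrib, ← Finset.sum_add_distrib]
  refine Finset.sum_congr rfl fun a _ => Finset.sum_congr rfl fun b _ => ?_
  simp only [wtc, Bool.false_eq_true, ↓reduceIte]
  split_ifs <;> ring

lemma omegaW_concat (M : List (Letter k)) (x : Letter k) : omegaW (M ++ [x]) = letterSign x := by
  simp [omegaW, letterSign]

lemma omegaW_cons_cons (x y : Letter k) (t : List (Letter k)) :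
    omegaW (x :: y :: t) = omegaW (y :: t) := by
  simp [omegaW, List.getLast?_cons_cons]

lemma wtcSum_concat (u : List (Letter k)) :
    ∀ {M : List (Letter k)} {y : Letter k}, M.getLast? = some y →
      ∀ x, wtcSum u (M ++ [x]) = wtcSum u M + wtc u y x
  | [z], y, h, x => by simp_all [wtcSum]
  | z :: w :: t, y, h, x => by
    rw [List.getLast?_cons_cons] at h
    simp only [List.cons_append, wtcSum] at *
    rw [← List.cons_append, wtcSum_concat u h x, add_assoc]

lemma tau_eq_wtcSum_add_omegaW (g : FreeGroup (Fin k)) :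
    tau u g = wtcSum u g.toWord + omegaW g.toWord := by
  rw [tau, alphaW_add_betaW]

lemma tau_mk_of_isReduced {L : List (Letter k)} (hL : IsReduced L) :
    tau u (mk L) = wtcSum u L + omegaW L := by
  rw [tau_eq_wtcSum_add_omegaW, toWord_mk, hL.reduce_eq]

end Weight

section Symmetric

variable {k : ℕ} {u : List (Letter k)}

/-- This is `τ_u(yx) = τ_u(xy)` for a reduced two-letter word `xy`. -/
lemma wtc_add_letterSign_comm (hu : IsOriented u) (h : u = invWord u) {x y : Letter k}
    (hxy : x.1 = y.1 → x.2 = y.2) :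
    wtc u y x + letterSign x = wtc u x y + letterSign y := by
  obtain ⟨a, ε⟩ := x
  obtain ⟨b, δ⟩ := y
  have hsymm : ∀ x y, leftOf u x y ↔ leftOf u (invL y) (invL x) :=
    fun _ _ => leftOf_iff_of_eq_invWord hu h
  cases ε <;> cases δ <;> simp only [wtc, letterSign, Bool.false_eq_true, ↓reduceIte]
  · simp [hsymm (a, false) (b, true), invL]
  · have hab : (a, true) ≠ (b, true) := fun he => by simpa using hxy (Prod.ext_iff.mp he).1
    simp only [hsymm (b, false) (a, false), invL, Bool.not_false]
    rcases leftOf_total hu hab with h' | h'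
    · norm_num [h', leftOf_asymm h']
    · norm_num [h', leftOf_asymm h']
  · have hab : (a, true) ≠ (b, true) := fun he => by simpa using hxy (Prod.ext_iff.mp he).1
    simp only [hsymm (a, false) (b, false), invL, Bool.not_false]
    rcases leftOf_total hu hab with h' | h'
    · norm_num [h', leftOf_asymm h']
    · norm_num [h', leftOf_asymm h']
  · simp [hsymm (a, false) (b, true), invL]

lemma wtcSum_add_omegaW_reverse (hu : IsOriented u) (h : u = invWord u) :
    ∀ {L : List (Letter k)}, IsReduced L →
      wtcSum u L.reverse + omegaW L.reverse = wtcSum u L + omegaW L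
  | [], _ => rfl
  | [_], _ => rfl
  | x :: y :: t, hL => by
    obtain ⟨hxy, hL'⟩ := isReduced_cons_cons.mp hL
    have hlast : (y :: t).reverse.getLast? = some y := by simp
    have ih := wtcSum_add_omegaW_reverse hu h hL'
    have hω : omegaW (y :: t).reverse = letterSign y := by
      simpa using omegaW_concat t.reverse y
    rw [List.reverse_cons, wtcSum_concat u hlast, omegaW_concat, wtcSum, omegaW_cons_cons]
    linarith [wtc_add_letterSign_comm hu h hxy]

lemma tau_mk_reverse_toWord_of_eq_invWord (hu : IsOriented u) (h : u = invWord u)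
    (g : FreeGroup (Fin k)) : tau u (mk g.toWord.reverse) = tau u g := by
  rw [tau_mk_of_isReduced isReduced_toWord.reverse,
    wtcSum_add_omegaW_reverse hu h isReduced_toWord, tau_eq_wtcSum_add_omegaW]

end Symmetric

section Counterexamples

variable {k : ℕ} {u : List (Letter k)}

lemma exists_reversal_counterexample_of_isReduced {L : List (Letter k)} (hL : IsReduced L)
    (hpos : 0 < wtcSum u L + omegaW L) (hrev : wtcSum u L.reverse + omegaW L.reverse ≤ 0) :
    ∃ g : FreeGroup (Fin k), 0 < tau u g ∧ tau u (mk g.toWord.reverse) ≤ 0 :=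
  ⟨mk L, by rwa [tau_mk_of_isReduced hL], by
    rwa [toWord_mk, hL.reduce_eq, tau_mk_of_isReduced hL.reverse]⟩

lemma exists_reversal_counterexample_of_leftOf_leftOf {a b : Fin k} (hab : a ≠ b)
    (hpos : leftOf u (a, true) (b, true)) (hneg : leftOf u (a, false) (b, false)) :
    ∃ g : FreeGroup (Fin k), 0 < tau u g ∧ tau u (mk g.toWord.reverse) ≤ 0 := by
  refine exists_reversal_counterexample_of_isReduced (L := [(a, false), (b, true)])
    (by simp [hab]) ?_ ?_ <;>
    norm_num [wtcSum, wtc, omegaW, leftOf_asymm hpos, leftOf_asymm hneg]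

lemma exists_reversal_counterexample_of_leftOf_inv (hu : IsOriented u) {a b : Fin k}
    (hab : a ≠ b) (hpos : leftOf u (a, true) (b, false)) (hneg : leftOf u (a, false) (b, true)) :
    ∃ g : FreeGroup (Fin k), 0 < tau u g ∧ tau u (mk g.toWord.reverse) ≤ 0 := by
  have hne : ∀ ε, ((a, ε) : Letter k) ≠ (b, ε) := fun _ he => hab (Prod.ext_iff.mp he).1
  rcases leftOf_total hu (hne true) with hP | hP <;>
    rcases leftOf_total hu (hne false) with hQ | hQ
  · exact exists_reversal_counterexample_of_leftOf_leftOf hab hP hQ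
  · -- `u` orders these letters as `a, b⁻¹, a⁻¹, b`
    refine exists_reversal_counterexample_of_isReduced (L := [(b, true), (a, false), (b, false)])
      (by simp [hab, Ne.symm hab]) ?_ ?_ <;>
      norm_num [wtcSum, wtc, omegaW, hQ, hneg, leftOf_asymm hpos, leftOf_asymm hP]
  · -- `u` orders these letters as `a⁻¹, b, a, b⁻¹`
    refine exists_reversal_counterexample_of_isReduced (L := [(a, true), (b, true), (a, false)])
      (by simp [hab, Ne.symm hab]) ?_ ?_ <;>
      norm_num [wtcSum, wtc, omegaW, hP, hneg, leftOf_asymm hpos, leftOf_asymm hQ]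
  · exact exists_reversal_counterexample_of_leftOf_leftOf (Ne.symm hab) hP hQ

lemma exists_reversal_counterexample_of_leftOf_invL (hu : IsOriented u) {x y : Letter k}
    (hxy : leftOf u x y) (hxy' : leftOf u (invL x) (invL y)) :
    ∃ g : FreeGroup (Fin k), 0 < tau u g ∧ tau u (mk g.toWord.reverse) ≤ 0 := by
  wlog hx : x.2 generalizing x y
  · exact this hxy' (by simpa using hxy) (by simpa [invL] using hx)
  obtain ⟨a, ε⟩ := x
  obtain ⟨b, δ⟩ := y
  obtain rfl : ε = true := hx
  have hab : a ≠ b := by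
    rintro rfl
    cases δ
    · exact leftOf_asymm hxy hxy'
    · exact lt_irrefl _ hxy
  cases δ
  · exact exists_reversal_counterexample_of_leftOf_inv hu hab hxy hxy'
  · exact exists_reversal_counterexample_of_leftOf_leftOf hab hxy hxy'

end Counterexamples

theorem stmt14_general {k : ℕ} (u : List (Letter k)) (hu : IsOriented u) :
    (∀ g : FreeGroup (Fin k), 0 < tau u g → 0 < tau u (FreeGroup.mk g.toWord.reverse))
    ↔ u = invWord u := by
  refine ⟨fun hclosed => ?_, fun h g hg => ?_⟩
  · by_contra hne
    obtain ⟨x, y, hxy, hxy'⟩ := exists_leftOf_leftOf_invL_of_ne_invWord hu hne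
    obtain ⟨g, hpos, hrev⟩ := exists_reversal_counterexample_of_leftOf_invL hu hxy hxy'
    exact (hclosed g hpos).not_ge hrev
  · rwa [tau_mk_reverse_toWord_of_eq_invWord hu h]

theorem stmt14 {k : ℕ} (hk : 2 ≤ k) (u : List (Letter k)) (hu : IsOriented u) :
    (∀ g : FreeGroup (Fin k), 0 < tau u g → 0 < tau u (FreeGroup.mk g.toWord.reverse))
    ↔ u = invWord u :=
  stmt14_general u hu
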